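/- Let K ≥ 2 and n ≥ 1. Consider training data in ℝ^K given by x_i = α_i e_{y_i} with scales α_i > 0 and labels y_i ∈ {1,…,K} for i = 1,…,n, where every class appears (the map i ↦ y_i is surjective onto {1,…,K}). Fix c > 0 and a ∈ (0,1], and set η_t = c·t^{−a} for t ≥ 1. For each epoch r ∈ ℕ let σ_r be an arbitrary permutation of {1,…,n}, and define the sample index at step t ≥ 1 by i_t = σ_r(k+1), where t − 1 = r·n + k with 0 ≤ k < n. Define the per-sample SignSGD iterates W_0 = 0 ∈ ℝ^{K×K} and W_t = W_{t−1} − η_t · sgn((S(W_{t−1} x_{i_t}) − e_{y_{i_t}}) x_{i_t}ᵀ) for t ≥ 1. Let W̄ = ∑_{i=1}^n (2e_{y_i} − 𝟙) e_{y_i}ᵀ. Then: (1) the cross-entropy training loss converges to zero, lim_{t→∞} L(W_t) = 0; and (2) the iterate direction converges, lim_{t→∞} W_t / ‖W_t‖_F = W̄ / ‖W̄‖_F in Frobenius norm. -/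

import Mathlib

open Finset Filter

/-- Softmax map on `ℝ^k`. -/
noncomputable def softmax {k : ℕ} (z : Fin k → ℝ) (c : Fin k) : ℝ :=
  Real.exp (z c) / ∑ j, Real.exp (z j)

/-- Logits `W x` of a linear classifier `W : ℝ^{k×d}` on input `x : ℝ^d`. -/
noncomputable def logits {k d : ℕ} (W : Fin k → Fin d → ℝ) (x : Fin d → ℝ) : Fin k → ℝ :=
  fun c => ∑ j, W c j * x j

/-- Cross-entropy loss `L(W) = -(1/n) ∑ᵢ log S_{yᵢ}(W xᵢ)`. -/
noncomputable def lossCE {n k d : ℕ} (x : Fin n → Fin d → ℝ) (y : Fin n → Fin k)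
    (W : Fin k → Fin d → ℝ) : ℝ :=
  -((1 : ℝ) / n) * ∑ i, Real.log (softmax (logits W (x i)) (y i))

/-- Proxy function `G(W) = (1/n) ∑ᵢ (1 - S_{yᵢ}(W xᵢ))`. -/
noncomputable def proxyG {n k d : ℕ} (x : Fin n → Fin d → ℝ) (y : Fin n → Fin k)
    (W : Fin k → Fin d → ℝ) : ℝ :=
  ((1 : ℝ) / n) * ∑ i, (1 - softmax (logits W (x i)) (y i))

/-- Per-sample gradient matrix `gᵢ(W) = (S(W xᵢ) - e_{yᵢ}) xᵢᵀ`. -/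
noncomputable def sampleGrad {k d : ℕ} (x : Fin d → ℝ) (y : Fin k)
    (W : Fin k → Fin d → ℝ) : Fin k → Fin d → ℝ :=
  fun c j => (softmax (logits W x) c - (if c = y then 1 else 0)) * x j

/-- Full gradient matrix `D(W) = (1/n) ∑ᵢ gᵢ(W)`. -/
noncomputable def gradCE {n k d : ℕ} (x : Fin n → Fin d → ℝ) (y : Fin n → Fin k)
    (W : Fin k → Fin d → ℝ) : Fin k → Fin d → ℝ :=
  fun c j => ((1 : ℝ) / n) * ∑ i, sampleGrad (x i) (y i) W c j

/-- Entry-wise 1-norm of a matrix. -/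
noncomputable def norm1M {k d : ℕ} (A : Fin k → Fin d → ℝ) : ℝ :=
  ∑ c, ∑ j, |A c j|

/-- 1-norm of a vector. -/
noncomputable def norm1V {d : ℕ} (v : Fin d → ℝ) : ℝ := ∑ j, |v j|

/-- `min_{c ≠ y} (e_y - e_c)ᵀ A x`. -/
noncomputable def marginMin {k d : ℕ} (hk : 2 ≤ k) (A : Fin k → Fin d → ℝ)
    (x : Fin d → ℝ) (y : Fin k) : ℝ :=
  (Finset.univ.erase y).inf'
    (by
      obtain ⟨cne, hcne⟩ := Fintype.exists_ne_of_one_lt_card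
        (by simpa using (by omega : 1 < k)) y
      exact ⟨cne, Finset.mem_erase.mpr ⟨hcne, Finset.mem_univ _⟩⟩)
    (fun c => logits A x y - logits A x c)

/-- `min_{i ∈ [n], c ≠ yᵢ} (e_{yᵢ} - e_c)ᵀ W xᵢ`. -/
noncomputable def dataMargin {n k d : ℕ} (hn : 1 ≤ n) (hk : 2 ≤ k)
    (x : Fin n → Fin d → ℝ) (y : Fin n → Fin k) (W : Fin k → Fin d → ℝ) : ℝ :=
  Finset.univ.inf' ⟨⟨0, by omega⟩, Finset.mem_univ _⟩
    (fun i => marginMin hk W (x i) (y i))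

/-- Max margin `γ` over the max-norm unit ball. -/
noncomputable def gammaMax {n k d : ℕ} (hn : 1 ≤ n) (hk : 2 ≤ k)
    (x : Fin n → Fin d → ℝ) (y : Fin n → Fin k) : ℝ :=
  sSup { g : ℝ | ∃ W' : Fin k → Fin d → ℝ, ‖W'‖ ≤ 1 ∧ g = dataMargin hn hk x y W' }

/-- Mini-batch gradient `(1/b) ∑_{i ∈ B} gᵢ(W)`. -/
noncomputable def batchGrad {n k d : ℕ} (x : Fin n → Fin d → ℝ) (y : Fin n → Fin k)
    (B : Finset (Fin n)) (b : ℕ) (W : Fin k → Fin d → ℝ) : Fin k → Fin d → ℝ :=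
  fun c j => ((1 : ℝ) / b) * ∑ i ∈ B, sampleGrad (x i) (y i) W c j

/-- Frobenius norm of a matrix. -/
noncomputable def frobNorm {k d : ℕ} (A : Fin k → Fin d → ℝ) : ℝ :=
  Real.sqrt (∑ c, ∑ j, (A c j) ^ 2)

/-!
On the orthogonal data `xᵢ = αᵢ e_{yᵢ}` the sign of the per-sample gradient does not depend on the
iterate, since `0 < S_c < 1`: it is `−(2e_{yᵢ} − 𝟙) e_{yᵢ}ᵀ`. Hence `W_t = ∑ⱼ Aⱼ(t) (2eⱼ − 𝟙) eⱼᵀ`,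
where `Aⱼ(t)` is the total step size spent on samples of class `j`. Every epoch visits each sample
once, so the centred class indicators have bounded partial sums, and Abel summation against the
decreasing steps gives `Aⱼ(t) = (Nⱼ / n) H(t) + O(1)` with `Nⱼ` the size of class `j` and
`H(t) = η₁ + ⋯ + η_t → ∞` (as `a ≤ 1`). So every margin `αᵢ A_{yᵢ}(t)` diverges, which sends the
loss to zero, and `W_t / (H(t) / n) → ∑ⱼ Nⱼ (2eⱼ − 𝟙) eⱼᵀ = W̄`.
-/

open Topology

theorem abs_sum_range_mul_le_of_antitone {g d : ℕ → ℝ} {C : ℝ} (hg : Antitone g)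
    (hg0 : ∀ s, 0 ≤ g s) (hd : ∀ t, |∑ s ∈ range t, d s| ≤ C) (t : ℕ) :
    |∑ s ∈ range t, g s * d s| ≤ C * g 0 := by
  have hgap : ∀ i, 0 ≤ g i - g (i + 1) := fun i => sub_nonneg.2 (hg (Nat.le_succ i))
  have hparts := sum_range_by_parts g d t
  simp only [smul_eq_mul] at hparts
  rw [hparts]
  calc |g (t - 1) * ∑ s ∈ range t, d s
          - ∑ i ∈ range (t - 1), (g (i + 1) - g i) * ∑ s ∈ range (i + 1), d s|
      ≤ g (t - 1) * C + ∑ i ∈ range (t - 1), (g i - g (i + 1)) * C := by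
        refine (abs_sub _ _).trans (add_le_add ?_ ?_)
        · rw [abs_mul, abs_of_nonneg (hg0 _)]
          exact mul_le_mul_of_nonneg_left (hd t) (hg0 _)
        · refine (abs_sum_le_sum_abs _ _).trans (sum_le_sum fun i _ => ?_)
          rw [abs_mul, abs_sub_comm, abs_of_nonneg (hgap i)]
          exact mul_le_mul_of_nonneg_left (hd _) (hgap i)
    _ = C * g 0 := by rw [← sum_mul, sum_range_sub']; ring

theorem abs_sum_range_le_of_sum_Ico_eq_zero {n : ℕ} (hn : 0 < n) {d : ℕ → ℝ} {B : ℝ}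
    (hblock : ∀ r, ∑ s ∈ Ico (r * n) (r * n + n), d s = 0) (hd : ∀ s, |d s| ≤ B) (t : ℕ) :
    |∑ s ∈ range t, d s| ≤ n * B := by
  have hzero : ∀ q, ∑ s ∈ range (q * n), d s = 0 := by
    intro q
    induction q with
    | zero => simp
    | succ q ih =>
      rw [Nat.succ_mul, ← sum_range_add_sum_Ico _ (Nat.le_add_right _ _), ih, hblock, add_zero]
  rw [← sum_range_add_sum_Ico _ (Nat.div_mul_le_self t n), hzero, zero_add, sum_Ico_eq_sum_range]
  calc |∑ k ∈ range (t - t / n * n), d (t / n * n + k)|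
      ≤ ∑ k ∈ range (t - t / n * n), B :=
        (abs_sum_le_sum_abs _ _).trans (sum_le_sum fun k _ => hd _)
    _ = (t % n : ℕ) * B := by
        rw [sum_const, card_range, nsmul_eq_mul, Nat.mod_eq_sub_mul_div, mul_comm n]
    _ ≤ n * B := mul_le_mul_of_nonneg_right (by exact_mod_cast (Nat.mod_lt t hn).le)
        ((abs_nonneg _).trans (hd 0))

theorem sum_Ico_reshuffle {M : Type*} [AddCommMonoid M] {n : ℕ} (hn : 0 < n)
    (σ : ℕ → Equiv.Perm (Fin n)) (f : Fin n → M) (r : ℕ) :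
    ∑ s ∈ Ico (r * n) (r * n + n), f (σ (s / n) ⟨s % n, Nat.mod_lt _ hn⟩) = ∑ i, f i :=
  calc ∑ s ∈ Ico (r * n) (r * n + n), f (σ (s / n) ⟨s % n, Nat.mod_lt _ hn⟩)
      = ∑ k ∈ range n, f (σ r ⟨k % n, Nat.mod_lt _ hn⟩) := by
        rw [sum_Ico_eq_sum_range, Nat.add_sub_cancel_left]
        refine sum_congr rfl fun k hk => ?_
        have hdiv : (r * n + k) / n = r := by
          rw [Nat.add_comm, Nat.add_mul_div_right _ _ hn, Nat.div_eq_of_lt (mem_range.1 hk),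
            zero_add]
        simp only [hdiv, Nat.mul_add_mod_self_right]
    _ = ∑ i, f (σ r i) := by
        rw [← Fin.sum_univ_eq_sum_range]
        simp only [Nat.mod_eq_of_lt (Fin.isLt _), Fin.eta]
    _ = ∑ i, f i := Equiv.sum_comp (σ r) f

theorem abs_sum_reshuffle_sub_mean_mul_le {n : ℕ} (hn : 0 < n) (σ : ℕ → Equiv.Perm (Fin n))
    {g : ℕ → ℝ} (hg : Antitone g) (hg0 : ∀ s, 0 ≤ g s) {f : Fin n → ℝ}
    (hf : ∀ i, f i ∈ Set.Icc (0 : ℝ) 1) (t : ℕ) :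
    |∑ s ∈ range t, g s * f (σ (s / n) ⟨s % n, Nat.mod_lt _ hn⟩)
      - (∑ i, f i) / n * ∑ s ∈ range t, g s| ≤ n * g 0 := by
  set m := (∑ i, f i) / n
  have hnR : (0 : ℝ) < n := Nat.cast_pos.2 hn
  have hm : m ∈ Set.Icc (0 : ℝ) 1 := by
    refine ⟨div_nonneg (sum_nonneg fun i _ => (hf i).1) hnR.le, div_le_one_of_le₀ ?_ hnR.le⟩
    simpa using sum_le_sum fun i (_ : i ∈ univ) => (hf i).2
  have hblock : ∀ r, ∑ s ∈ Ico (r * n) (r * n + n),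
      (f (σ (s / n) ⟨s % n, Nat.mod_lt _ hn⟩) - m) = 0 := by
    intro r
    rw [sum_sub_distrib, sum_Ico_reshuffle hn σ f, sum_const, Nat.card_Ico,
      Nat.add_sub_cancel_left, nsmul_eq_mul, mul_div_cancel₀ _ hnR.ne', sub_self]
  have hdev : ∀ s, |f (σ (s / n) ⟨s % n, Nat.mod_lt _ hn⟩) - m| ≤ 1 := fun s => by
    obtain ⟨hf0, hf1⟩ := hf (σ (s / n) ⟨s % n, Nat.mod_lt _ hn⟩)
    rw [abs_le]
    constructor <;> linarith [hm.1, hm.2]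
  have hpartial := abs_sum_range_le_of_sum_Ico_eq_zero hn hblock hdev
  rw [mul_one] at hpartial
  rw [mul_sum, ← sum_sub_distrib]
  simp_rw [mul_comm m, ← mul_sub]
  exact abs_sum_range_mul_le_of_antitone hg hg0 hpartial t

theorem abs_sum_single_reshuffle_sub_le {k n : ℕ} (hn : 0 < n) (σ : ℕ → Equiv.Perm (Fin n))
    (y : Fin n → Fin k) {g : ℕ → ℝ} (hg : Antitone g) (hg0 : ∀ s, 0 ≤ g s) (j : Fin k) (t : ℕ) :
    |(∑ s ∈ range t, g s • (Pi.single (y (σ (s / n) ⟨s % n, Nat.mod_lt _ hn⟩)) 1 : Fin k → ℝ)) j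
      - (∑ i, (Pi.single (y i) 1 : Fin k → ℝ)) j * ((∑ s ∈ range t, g s) / n)| ≤ n * g 0 := by
  have hbound := abs_sum_reshuffle_sub_mean_mul_le hn σ hg hg0
    (f := fun i => (Pi.single (y i) 1 : Fin k → ℝ) j)
    (fun i => by rw [Pi.single_apply]; split_ifs <;> norm_num) t
  convert hbound using 3
  · simp only [Finset.sum_apply, Pi.smul_apply, smul_eq_mul]
  · rw [Finset.sum_apply]
    ring

theorem antitone_rpow_neg_succ {a : ℝ} (ha : 0 ≤ a) : Antitone fun s : ℕ => ((s : ℝ) + 1) ^ (-a) :=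
  fun _ _ hst => Real.rpow_le_rpow_of_nonpos (by positivity) (by gcongr) (by linarith)

theorem tendsto_sum_range_rpow_neg_succ_atTop {a : ℝ} (ha : a ≤ 1) :
    Tendsto (fun t => ∑ s ∈ range t, ((s : ℝ) + 1) ^ (-a)) atTop atTop := by
  refine tendsto_atTop_mono (fun t => sum_le_sum fun s _ => ?_)
    Real.tendsto_sum_range_one_div_nat_succ_atTop
  rw [one_div, ← Real.rpow_neg_one]
  exact Real.rpow_le_rpow_of_exponent_le (by linarith [s.cast_nonneg (α := ℝ)]) (by linarith)

section

variable {k : ℕ}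

theorem softmax_pos (z : Fin k → ℝ) (c : Fin k) : 0 < softmax z c :=
  div_pos (Real.exp_pos _) (sum_pos (fun _ _ => Real.exp_pos _) ⟨c, mem_univ _⟩)

theorem softmax_lt_one (hk : 1 < k) (z : Fin k → ℝ) (c : Fin k) : softmax z c < 1 := by
  rw [softmax, div_lt_one (sum_pos (fun _ _ => Real.exp_pos _) ⟨c, mem_univ _⟩)]
  obtain ⟨c', hc'⟩ := Fintype.exists_ne_of_one_lt_card (by simpa using hk) c
  exact single_lt_sum hc' (mem_univ _) (mem_univ _) (Real.exp_pos _)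
    fun _ _ _ => (Real.exp_pos _).le

theorem softmax_ite_neg_self (y : Fin k) (u : ℝ) :
    softmax (fun c => if c = y then u else -u) y = (1 + (k - 1) * Real.exp (-(2 * u)))⁻¹ := by
  have hrest :
      ∑ c ∈ univ.erase y, Real.exp (if c = y then u else -u) = (k - 1) * Real.exp (-u) := by
    rw [sum_congr rfl fun c hc => by rw [if_neg (ne_of_mem_erase hc)], sum_const,
      card_erase_of_mem (mem_univ y), card_univ, Fintype.card_fin, nsmul_eq_mul,
      Nat.cast_pred (Fin.pos y)]
  rw [softmax, ← add_sum_erase _ _ (mem_univ y), hrest, if_pos rfl,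
    show -(2 * u) = -u + -u by ring, Real.exp_add, Real.exp_neg]
  field_simp

theorem tendsto_log_softmax_ite_neg_self (y : Fin k) :
    Tendsto (fun u => Real.log (softmax (fun c => if c = y then u else -u) y)) atTop (𝓝 0) := by
  simp_rw [softmax_ite_neg_self]
  have hexp : Tendsto (fun u : ℝ => Real.exp (-(2 * u))) atTop (𝓝 0) :=
    Real.tendsto_exp_atBot.comp (tendsto_neg_atTop_atBot.comp (tendsto_id.const_mul_atTop two_pos))
  have hsoftmax := ((hexp.const_mul ((k : ℝ) - 1)).const_add 1).inv₀ (by norm_num)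
  rw [mul_zero, add_zero, inv_one] at hsoftmax
  have hlog := (Real.continuousAt_log one_ne_zero).tendsto.comp hsoftmax
  rwa [Real.log_one] at hlog

/-- `classMatrix v = ∑ⱼ vⱼ (2eⱼ − 𝟙) eⱼᵀ`. -/
def classMatrix (v : Fin k → ℝ) : Fin k → Fin k → ℝ :=
  fun c j => (if c = j then 1 else -1) * v j

theorem continuous_classMatrix : Continuous (classMatrix (k := k)) := by
  unfold classMatrix
  fun_prop

theorem classMatrix_smul (r : ℝ) (v : Fin k → ℝ) :
    classMatrix (r • v) = r • classMatrix v := by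
  ext c j
  simp only [classMatrix, Pi.smul_apply, smul_eq_mul]
  ring

theorem classMatrix_ne_zero {v : Fin k → ℝ} (hv : v ≠ 0) : classMatrix v ≠ 0 := by
  obtain ⟨j, hj⟩ := Function.ne_iff.1 hv
  exact Function.ne_iff.2 ⟨j, Function.ne_iff.2 ⟨j, by simpa [classMatrix] using hj⟩⟩

theorem classMatrix_sum_single {ι : Type*} (s : Finset ι) (y : ι → Fin k) (c j : Fin k) :
    classMatrix (∑ i ∈ s, Pi.single (y i) 1) c j
      = ∑ i ∈ s, (2 * (if c = y i then (1 : ℝ) else 0) - 1) * (if j = y i then 1 else 0) := by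
  simp only [classMatrix, Finset.sum_apply, Pi.single_apply, mul_sum]
  refine sum_congr rfl fun i _ => ?_
  rcases eq_or_ne j (y i) with rfl | hj
  · split_ifs <;> norm_num
  · simp [hj]

theorem sum_single_one_apply_self_pos {ι : Type*} [Fintype ι] (y : ι → Fin k) (i : ι) :
    0 < (∑ i', (Pi.single (y i') 1 : Fin k → ℝ)) (y i) := by
  rw [Finset.sum_apply]
  exact sum_pos' (fun i' _ => by rw [Pi.single_apply]; split_ifs <;> norm_num)
    ⟨i, mem_univ _, by simp⟩

theorem logits_classMatrix {x : Fin k → ℝ} {y : Fin k} {α : ℝ}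
    (hx : ∀ j, x j = if j = y then α else 0) (v : Fin k → ℝ) :
    logits (classMatrix v) x = fun c => if c = y then α * v y else -(α * v y) := by
  ext c
  simp only [logits, hx, mul_ite, mul_zero, sum_ite_eq', mem_univ, if_true, classMatrix]
  split_ifs <;> simp_all <;> ring

theorem sign_sampleGrad_eq_neg_classMatrix (hk : 1 < k) {x : Fin k → ℝ} {y : Fin k}
    {α : ℝ} (hα : 0 < α) (hx : ∀ j, x j = if j = y then α else 0) (W : Fin k → Fin k → ℝ)
    (c j : Fin k) :
    Real.sign (sampleGrad x y W c j) = -classMatrix (Pi.single y 1) c j := by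
  have hlt := softmax_lt_one hk (logits W x) c
  have hpos := softmax_pos (logits W x) c
  simp only [sampleGrad, classMatrix, hx, Pi.single_apply]
  by_cases hj : j = y
  · subst hj
    by_cases hc : c = j
    · subst hc
      simp only [if_true]
      rw [Real.sign_of_neg (mul_neg_of_neg_of_pos (by linarith) hα)]
      ring
    · rw [if_neg hc, if_pos rfl, if_neg hc, if_pos rfl,
        Real.sign_of_pos (mul_pos (by linarith) hα)]
      ring
  · simp [hj]

end

theorem signSGD_eq_classMatrix {K n : ℕ} (hK : 1 < K) {α : Fin n → ℝ} (hα : ∀ i, 0 < α i)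
    {y : Fin n → Fin K} {x : Fin n → Fin K → ℝ} (hx : ∀ i j, x i j = if j = y i then α i else 0)
    {η : ℕ → ℝ} {idx : ℕ → Fin n} {W : ℕ → Fin K → Fin K → ℝ} (hW0 : W 0 = 0)
    (hWrec : ∀ t : ℕ, 1 ≤ t → ∀ c j : Fin K,
      W t c j = W (t - 1) c j
        - η t * Real.sign (sampleGrad (x (idx t)) (y (idx t)) (W (t - 1)) c j))
    (t : ℕ) :
    W t = classMatrix (∑ s ∈ range t, η (s + 1) • Pi.single (y (idx (s + 1))) 1) := by
  induction t with
  | zero => ext c j; simp [hW0, classMatrix]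
  | succ t ih =>
    ext c j
    rw [hWrec (t + 1) (Nat.le_add_left 1 t), Nat.add_sub_cancel, ih,
      sign_sampleGrad_eq_neg_classMatrix hK (hα _) (hx _), sum_range_succ]
    simp only [classMatrix, Pi.add_apply, Pi.smul_apply, smul_eq_mul]
    ring

theorem tendsto_lossCE_classMatrix {K n : ℕ} {α : Fin n → ℝ} (hα : ∀ i, 0 < α i)
    {y : Fin n → Fin K} {x : Fin n → Fin K → ℝ} (hx : ∀ i j, x i j = if j = y i then α i else 0)
    {v : ℕ → Fin K → ℝ} (hv : ∀ i, Tendsto (fun t => v t (y i)) atTop atTop) :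
    Tendsto (fun t => lossCE x y (classMatrix (v t))) atTop (𝓝 0) := by
  have hterm : ∀ i, Tendsto (fun t => Real.log (softmax (logits (classMatrix (v t)) (x i)) (y i)))
      atTop (𝓝 0) := fun i => by
    simp only [logits_classMatrix (hx i)]
    exact (tendsto_log_softmax_ite_neg_self (y i)).comp ((hv i).const_mul_atTop (hα i))
  simpa [lossCE] using (tendsto_finsetSum univ fun i _ => hterm i).const_mul (-((1 : ℝ) / n))

theorem continuous_frobNorm {k d : ℕ} : Continuous (frobNorm (k := k) (d := d)) := by
  unfold frobNorm
  fun_prop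

theorem frobNorm_smul {k d : ℕ} (r : ℝ) (A : Fin k → Fin d → ℝ) :
    frobNorm (r • A) = |r| * frobNorm A := by
  simp only [frobNorm, Pi.smul_apply, smul_eq_mul, mul_pow, ← mul_sum]
  rw [Real.sqrt_mul (sq_nonneg r), Real.sqrt_sq_eq_abs]

theorem frobNorm_pos {k d : ℕ} {A : Fin k → Fin d → ℝ} (hA : A ≠ 0) : 0 < frobNorm A := by
  obtain ⟨c, hc⟩ := Function.ne_iff.1 hA
  obtain ⟨j, hj⟩ := Function.ne_iff.1 hc
  refine Real.sqrt_pos.2 (lt_of_lt_of_le (pow_pos (abs_pos.2 hj) 2) ?_)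
  rw [sq_abs]
  exact (single_le_sum (fun j _ => sq_nonneg (A c j)) (mem_univ j)).trans
    (single_le_sum (fun c _ => sum_nonneg fun j _ => sq_nonneg (A c j)) (mem_univ c))

theorem tendsto_inv_smul_self_of_homogeneous {ι E : Type*} [AddCommGroup E] [Module ℝ E]
    [TopologicalSpace E] [ContinuousSMul ℝ E] {N : E → ℝ} (hN : Continuous N)
    (hhom : ∀ (r : ℝ) (u : E), 0 < r → N (r • u) = r * N u) {l : Filter ι} {v : ι → E}
    {h : ι → ℝ} {L : E} (hL : N L ≠ 0) (hv : Tendsto (fun t => (h t)⁻¹ • v t) l (𝓝 L))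
    (hh : ∀ᶠ t in l, 0 < h t) :
    Tendsto (fun t => (N (v t))⁻¹ • v t) l (𝓝 ((N L)⁻¹ • L)) := by
  have hcont : ContinuousAt (fun u => (N u)⁻¹ • u) L :=
    (hN.continuousAt.inv₀ hL).smul continuousAt_id
  refine (hcont.tendsto.comp hv).congr' ?_
  filter_upwards [hh] with t ht
  simp only [Function.comp_apply, hhom _ _ (inv_pos.2 ht), mul_inv, inv_inv, smul_smul]
  rw [mul_right_comm, mul_inv_cancel₀ ht.ne', one_mul]

theorem tendsto_frobNorm_direction_classMatrix {K : ℕ} {v : ℕ → Fin K → ℝ} {h : ℕ → ℝ}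
    {w : Fin K → ℝ} (hw : w ≠ 0) (hv : ∀ j, Tendsto (fun t => v t j / h t) atTop (𝓝 (w j)))
    (hh : ∀ᶠ t in atTop, 0 < h t) :
    Tendsto (fun t => frobNorm ((frobNorm (classMatrix (v t)))⁻¹ • classMatrix (v t)
      - (frobNorm (classMatrix w))⁻¹ • classMatrix w)) atTop (𝓝 0) := by
  have hscaled : Tendsto (fun t => (h t)⁻¹ • classMatrix (v t)) atTop (𝓝 (classMatrix w)) := by
    simp only [← classMatrix_smul]
    refine continuous_classMatrix.continuousAt.tendsto.comp (tendsto_pi_nhds.2 fun j => ?_)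
    simpa [div_eq_inv_mul] using hv j
  have hdir := tendsto_inv_smul_self_of_homogeneous continuous_frobNorm
    (fun r u hr => by rw [frobNorm_smul, abs_of_pos hr]) (frobNorm_pos (classMatrix_ne_zero hw)).ne'
    hscaled hh
  have hzero : frobNorm (0 : Fin K → Fin K → ℝ) = 0 := by simp [frobNorm]
  have hnorm := (continuous_frobNorm.tendsto 0).comp (tendsto_sub_nhds_zero_iff.2 hdir)
  rwa [hzero] at hnorm

theorem tendsto_div_of_abs_sub_mul_le {ι : Type*} {l : Filter ι} {a b : ι → ℝ} {m C : ℝ}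
    (hab : ∀ t, |a t - m * b t| ≤ C) (hb : Tendsto b l atTop) :
    Tendsto (fun t => a t / b t) l (𝓝 m) := by
  have herr : Tendsto (fun t => a t / b t - m) l (𝓝 0) := by
    refine squeeze_zero_norm' ?_ ((tendsto_const_nhds (x := C)).div_atTop hb)
    filter_upwards [hb.eventually_gt_atTop 0] with t ht
    rw [Real.norm_eq_abs, div_sub' ht.ne', abs_div, abs_of_pos ht, mul_comm (b t)]
    exact div_le_div_of_nonneg_right (hab t) ht.le
  simpa using herr.add_const m

theorem tendsto_atTop_of_abs_sub_mul_le {ι : Type*} {l : Filter ι} {a b : ι → ℝ} {m C : ℝ}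
    (hm : 0 < m) (hab : ∀ t, |a t - m * b t| ≤ C) (hb : Tendsto b l atTop) :
    Tendsto a l atTop :=
  tendsto_atTop_mono (fun t => by linarith [(abs_le.1 (hab t)).1])
    (tendsto_atTop_add_const_right _ (-C) (hb.const_mul_atTop hm))

/-- on the orthogonal scale-skewed dataset, per-sample SignSGD with
random reshuffling and step sizes `η_t = c t^{−a}` drives the cross-entropy loss to
zero, and the iterate direction converges (in Frobenius norm) to
`W̄/‖W̄‖_F` where `W̄ = ∑ᵢ (2e_{yᵢ} − 𝟙) e_{yᵢ}ᵀ`. -/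
theorem persample_signsgd_implicit_bias (K n : ℕ) (hK : 2 ≤ K) (hn : 1 ≤ n)
    (α : Fin n → ℝ) (hα : ∀ i, 0 < α i)
    (y : Fin n → Fin K)
    (x : Fin n → Fin K → ℝ) (hx : ∀ i j, x i j = if j = y i then α i else 0)
    (c a : ℝ) (hc : 0 < c) (ha0 : 0 < a) (ha1 : a ≤ 1)
    (η : ℕ → ℝ) (hη : ∀ t : ℕ, 1 ≤ t → η t = c * (t : ℝ) ^ (-a))
    (σ : ℕ → Equiv.Perm (Fin n))
    (idx : ℕ → Fin n)
    (hidx : ∀ t : ℕ, 1 ≤ t →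
      idx t = σ ((t - 1) / n) ⟨(t - 1) % n, Nat.mod_lt _ (by omega)⟩)
    (Wseq : ℕ → Fin K → Fin K → ℝ)
    (hW0 : Wseq 0 = 0)
    (hWrec : ∀ t : ℕ, 1 ≤ t → ∀ cc jj : Fin K,
      Wseq t cc jj = Wseq (t - 1) cc jj
        - η t * Real.sign (sampleGrad (x (idx t)) (y (idx t)) (Wseq (t - 1)) cc jj))
    (Wbar : Fin K → Fin K → ℝ)
    (hWbar : ∀ cc jj, Wbar cc jj
      = ∑ i, (2 * (if cc = y i then (1 : ℝ) else 0) - 1) * (if jj = y i then 1 else 0)) :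
    Filter.Tendsto (fun t => lossCE x y (Wseq t)) Filter.atTop (nhds 0)
    ∧ Filter.Tendsto
        (fun t => frobNorm ((frobNorm (Wseq t))⁻¹ • Wseq t - (frobNorm Wbar)⁻¹ • Wbar))
        Filter.atTop (nhds 0) := by
  have hη' : ∀ s : ℕ, η (s + 1) = c * ((s : ℝ) + 1) ^ (-a) := fun s => by
    rw [hη _ (Nat.le_add_left 1 s), Nat.cast_succ]
  have hidx' : ∀ s : ℕ, idx (s + 1) = σ (s / n) ⟨s % n, Nat.mod_lt _ hn⟩ := fun s => by
    simp [hidx _ (Nat.le_add_left 1 s)]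
  have hW := signSGD_eq_classMatrix hK hα hx hW0 hWrec
  simp only [hη', hidx'] at hW
  set g : ℕ → ℝ := fun s => c * ((s : ℝ) + 1) ^ (-a)
  set N : Fin K → ℝ := ∑ i, Pi.single (y i) 1
  have hg : Antitone g := fun _ _ h =>
    mul_le_mul_of_nonneg_left (antitone_rpow_neg_succ ha0.le h) hc.le
  have hH : Tendsto (fun t => (∑ s ∈ range t, g s) / n) atTop atTop :=
    ((tendsto_sum_range_rpow_neg_succ_atTop ha1).const_mul_atTop hc).atTop_div_const
      (Nat.cast_pos.2 hn) |>.congr fun t => by rw [mul_sum]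
  have hbound := abs_sum_single_reshuffle_sub_le hn σ y hg (fun s => by positivity)
  have hN : N ≠ 0 := fun h => (sum_single_one_apply_self_pos y ⟨0, hn⟩).ne' (congrFun h _)
  rw [funext hW, show Wbar = classMatrix N from
    funext₂ fun c j => (hWbar c j).trans (classMatrix_sum_single _ _ _ _).symm]
  exact ⟨tendsto_lossCE_classMatrix hα hx fun i =>
      tendsto_atTop_of_abs_sub_mul_le (sum_single_one_apply_self_pos y i) (hbound (y i)) hH,
    tendsto_frobNorm_direction_classMatrix hN (fun j => tendsto_div_of_abs_sub_mul_le (hbound j) hH)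
      (hH.eventually_gt_atTop 0)⟩
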